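/- arXiv:math/9906128 — 8 statements merged into one kernel-verified Lean document; each statement's English description precedes it below -/
import Mathlib

section
/- Let X be a paracompact Hausdorff topological space, Z a topological vector space, and T : X → Set Z a multifunction with nonempty convex values such that every fiber T⁻¹(z) = {x ∈ X : z ∈ T(x)} is open in X. Then T admits a continuous selection: a continuous map g : X → Z with g(x) ∈ T(x) for all x ∈ X. -/
/-! A paracompact Hausdorff space is normal, so the open cover `{x | z ∈ T x}` (indexed by
`z : Z`, a cover because the values are nonempty) has a subordinate partition of unity `ρ`.
Then `g x = ∑ᶠ z, ρ z x • z` is continuous, and it is a convex combination of points `z` with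
`x ∈ tsupport (ρ z) ⊆ {x | z ∈ T x}`, hence lies in the convex set `T x`. -/

open Set

theorem PartitionOfUnity.finsum_smul_isSelection_of_isSubordinate
    {X Z : Type*} [TopologicalSpace X] [AddCommGroup Z] [Module ℝ Z] [TopologicalSpace Z]
    [ContinuousAdd Z] [ContinuousSMul ℝ Z] {T : X → Set Z} (hconv : ∀ x, Convex ℝ (T x))
    (ρ : PartitionOfUnity Z X univ) (hρ : ρ.IsSubordinate fun z => {x | z ∈ T x}) :
    Continuous (fun x => ∑ᶠ z, ρ z x • z) ∧ ∀ x, ∑ᶠ z, ρ z x • z ∈ T x :=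
  ⟨ρ.continuous_finsum_smul fun _ _ _ => continuousAt_const, fun x =>
    ρ.finsum_smul_mem_convex (g := fun z _ => z) (mem_univ x)
      (fun _ hz => hρ _ (subset_closure hz)) (hconv x)⟩

/-- Browder selection theorem: a multifunction from a paracompact Hausdorff
space into a topological vector space, with nonempty convex values and open
fibers, admits a continuous selection. -/
theorem browder_selection
    {X : Type*} [TopologicalSpace X] [ParacompactSpace X] [T2Space X]
    {Z : Type*} [AddCommGroup Z] [Module ℝ Z] [TopologicalSpace Z]
    [IsTopologicalAddGroup Z] [ContinuousSMul ℝ Z]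
    (T : X → Set Z)
    (hne : ∀ x, (T x).Nonempty)
    (hconv : ∀ x, Convex ℝ (T x))
    (hfib : ∀ z : Z, IsOpen {x : X | z ∈ T x}) :
    ∃ g : X → Z, Continuous g ∧ ∀ x, g x ∈ T x := by
  have hcover : univ ⊆ ⋃ z, {x | z ∈ T x} := fun x _ => mem_iUnion.2 (hne x)
  obtain ⟨ρ, hρ⟩ := PartitionOfUnity.exists_isSubordinate isClosed_univ _ hfib hcover
  exact ⟨_, ρ.finsum_smul_isSelection_of_isSubordinate hconv hρ⟩
end

section
/- Let X be a paracompact Hausdorff space, Y a topological vector space, and T : X → Set Y a lower semicontinuous multifunction with nonempty convex values (T need not have closed values). If the fibers need not be open, suppose only lower semicontinuity; then for every convex open neighborhood U of 0 in Y there exists a continuous map g : X → Y such that g(x) ∈ T(x) + U for all x ∈ X. -/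
/-!
By lower semicontinuity, a point of `T x` lies in `T x' + U` for all `x'` near `x`, so it is a
locally constant `U`-almost selection. The sets `T x' + U` are convex, so a partition of unity
glues these local constants into a continuous global one.
-/

open Pointwise Topology

theorem eventually_mem_add_of_lowerSemicontinuous
    {X : Type*} [TopologicalSpace X] {Y : Type*} [AddGroup Y] [TopologicalSpace Y]
    [IsTopologicalAddGroup Y] {T : X → Set Y}
    (hlsc : ∀ V : Set Y, IsOpen V → IsOpen {x : X | (T x ∩ V).Nonempty})
    {U : Set Y} (hUopen : IsOpen U) (hU0 : (0 : Y) ∈ U) {x : X} {y : Y} (hy : y ∈ T x) :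
    ∀ᶠ x' in 𝓝 x, y ∈ T x' + U := by
  set V : Set Y := (fun z => -z + y) ⁻¹' U
  have hV : IsOpen V := hUopen.preimage (by fun_prop)
  have hxV : (T x ∩ V).Nonempty := ⟨y, hy, by simpa [V] using hU0⟩
  filter_upwards [(hlsc V hV).mem_nhds hxV] with x' ⟨z, hz, hzV⟩
  exact Set.mem_add.2 ⟨z, hz, -z + y, hzV, add_neg_cancel_left z y⟩

/-- Almost selection for lower semicontinuous maps: for every convex open
neighborhood `U` of `0` there is a continuous `U`-almost selection. -/
theorem lsc_almost_selection
    {X : Type*} [TopologicalSpace X] [ParacompactSpace X] [T2Space X]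
    {Y : Type*} [AddCommGroup Y] [Module ℝ Y] [TopologicalSpace Y]
    [IsTopologicalAddGroup Y] [ContinuousSMul ℝ Y]
    (T : X → Set Y)
    (hlsc : ∀ V : Set Y, IsOpen V → IsOpen {x : X | (T x ∩ V).Nonempty})
    (hne : ∀ x, (T x).Nonempty)
    (hconv : ∀ x, Convex ℝ (T x))
    (U : Set Y) (hUopen : IsOpen U) (hUconv : Convex ℝ U) (hU0 : (0 : Y) ∈ U) :
    ∃ g : X → Y, Continuous g ∧ ∀ x, g x ∈ T x + U := by
  obtain ⟨g, hg⟩ := exists_continuous_forall_mem_convex_of_local_const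
    (t := fun x => T x + U) (fun x => (hconv x).add hUconv)
    fun x => ⟨(hne x).some,
      eventually_mem_add_of_lowerSemicontinuous hlsc hUopen hU0 (hne x).some_mem⟩
  exact ⟨g, g.continuous, hg⟩
end

section
/- Let X be a paracompact Hausdorff space, Y a Banach space, and T : X → Set Y a lower semicontinuous multifunction with nonempty closed convex values. Then T has a continuous selection: there is a continuous g : X → Y with g(x) ∈ T(x) for all x. -/
/-!
Lower semicontinuity makes "being close to `T x`" locally witnessed by a constant point, so
a partition of unity glues such constants into a continuous map into the convex sets
`thickening δ (T x)`, even while staying close to a given continuous map. Iterating with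
`δ = 2⁻ⁿ` gives continuous maps `fₙ` with `fₙ x` within `2⁻ⁿ` of `T x` and `dist fₙ fₙ₊₁`
geometrically small; their uniform limit is continuous and lies in the closed sets `T x`.
-/

open Metric Filter Topology

theorem exists_seq_of_forall_exists_succ {α : Type*} (P : ℕ → α → Prop)
    (R : ℕ → α → α → Prop) (h₀ : ∃ a, P 0 a) (h : ∀ n a, P n a → ∃ b, P (n + 1) b ∧ R n a b) :
    ∃ u : ℕ → α, (∀ n, P n (u n)) ∧ ∀ n, R n (u n) (u (n + 1)) := by
  choose next hnext hR using h
  let v : ∀ n, {a // P n a} :=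
    fun n => Nat.rec ⟨h₀.choose, h₀.choose_spec⟩ (fun n a => ⟨next n a.1 a.2, hnext n a.1 a.2⟩) n
  exact ⟨fun n => (v n).1, fun n => (v n).2, fun n => hR n (v n).1 (v n).2⟩

theorem exists_tendstoUniformly_of_dist_le_geometric {α β : Type*} [PseudoMetricSpace β]
    [CompleteSpace β] {F : ℕ → α → β} {C r : ℝ} (hr₀ : 0 ≤ r) (hr : r < 1)
    (hF : ∀ n x, dist (F n x) (F (n + 1) x) ≤ C * r ^ n) :
    ∃ g : α → β, TendstoUniformly F g atTop := by
  choose g hg using fun x =>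
    cauchySeq_tendsto_of_complete (cauchySeq_of_le_geometric r C hr (hF · x))
  refine ⟨g, Metric.tendstoUniformly_iff.2 fun ε hε => ?_⟩
  have hbound : Tendsto (fun n => C * r ^ n / (1 - r)) atTop (𝓝 0) := by
    simpa using ((tendsto_pow_atTop_nhds_zero_of_lt_one hr₀ hr).const_mul C).div_const (1 - r)
  filter_upwards [hbound.eventually_lt_const hε] with n hn x
  rw [dist_comm]
  exact (dist_le_of_le_geometric_of_tendsto r C hr (hF · x) (hg x) n).trans_lt hn

theorem mem_closure_of_tendsto_of_mem_thickening {β : Type*} [PseudoMetricSpace β] {s : Set β}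
    {u : ℕ → β} {a : β} {δ : ℕ → ℝ} (hu : Tendsto u atTop (𝓝 a)) (hδ : Tendsto δ atTop (𝓝 0))
    (hmem : ∀ n, u n ∈ thickening (δ n) s) : a ∈ closure s := by
  refine Metric.mem_closure_iff.2 fun ε hε => ?_
  obtain ⟨n, hδn, hun⟩ := ((hδ.eventually_lt_const (half_pos hε)).and
    ((tendsto_iff_dist_tendsto_zero.1 hu).eventually_lt_const (half_pos hε))).exists
  obtain ⟨z, hz, hdist⟩ := mem_thickening_iff.1 (hmem n)
  refine ⟨z, hz, ?_⟩
  calc dist a z ≤ dist (u n) a + dist (u n) z := dist_triangle_left _ _ _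
    _ < ε / 2 + ε / 2 := add_lt_add hun (hdist.trans hδn)
    _ = ε := add_halves ε

theorem eventually_mem_thickening_of_lsc {X Y : Type*} [TopologicalSpace X]
    [PseudoMetricSpace Y] {T : X → Set Y}
    (hlsc : ∀ V : Set Y, IsOpen V → IsOpen {x : X | (T x ∩ V).Nonempty})
    {x₀ : X} {z : Y} (hz : z ∈ T x₀) {δ : ℝ} (hδ : 0 < δ) :
    ∀ᶠ x in 𝓝 x₀, z ∈ thickening δ (T x) := by
  filter_upwards [(hlsc _ isOpen_ball).mem_nhds ⟨z, hz, mem_ball_self hδ⟩] with x ⟨w, hw, hwz⟩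
  exact mem_thickening_iff.2 ⟨w, hw, by rwa [dist_comm]⟩

section LowerSemicontinuous

variable {X : Type*} [TopologicalSpace X] [ParacompactSpace X] [T2Space X]
  {Y : Type*} [NormedAddCommGroup Y] [NormedSpace ℝ Y] {T : X → Set Y}

theorem exists_continuous_forall_mem_thickening_inter
    (hlsc : ∀ V : Set Y, IsOpen V → IsOpen {x : X | (T x ∩ V).Nonempty})
    (hconv : ∀ x, Convex ℝ (T x)) {U : X → Set Y} (hU : ∀ x, Convex ℝ (U x))
    (hlocal : ∀ x₀, ∃ z ∈ T x₀, ∀ᶠ x in 𝓝 x₀, z ∈ U x) {δ : ℝ} (hδ : 0 < δ) :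
    ∃ f : C(X, Y), ∀ x, f x ∈ thickening δ (T x) ∩ U x :=
  exists_continuous_forall_mem_convex_of_local_const
    (fun x => ((hconv x).thickening δ).inter (hU x)) fun x₀ =>
    let ⟨z, hz, hzU⟩ := hlocal x₀
    ⟨z, (eventually_mem_thickening_of_lsc hlsc hz hδ).and hzU⟩

theorem exists_continuous_forall_mem_thickening
    (hlsc : ∀ V : Set Y, IsOpen V → IsOpen {x : X | (T x ∩ V).Nonempty})
    (hne : ∀ x, (T x).Nonempty) (hconv : ∀ x, Convex ℝ (T x)) {δ : ℝ} (hδ : 0 < δ) :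
    ∃ f : C(X, Y), ∀ x, f x ∈ thickening δ (T x) := by
  obtain ⟨f, hf⟩ := exists_continuous_forall_mem_thickening_inter hlsc hconv
    (fun _ => convex_univ) (fun x₀ => ⟨(hne x₀).some, (hne x₀).some_mem, by simp⟩) hδ
  exact ⟨f, fun x => (hf x).1⟩

theorem exists_continuous_forall_mem_thickening_of_near
    (hlsc : ∀ V : Set Y, IsOpen V → IsOpen {x : X | (T x ∩ V).Nonempty})
    (hconv : ∀ x, Convex ℝ (T x)) {f₀ : C(X, Y)} {ε δ : ℝ} (hδ : 0 < δ)
    (hf₀ : ∀ x, f₀ x ∈ thickening ε (T x)) :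
    ∃ f : C(X, Y), ∀ x, f x ∈ thickening δ (T x) ∧ dist (f x) (f₀ x) < ε + δ := by
  refine exists_continuous_forall_mem_thickening_inter hlsc hconv (fun x => convex_ball _ _)
    (fun x₀ => ?_) hδ
  obtain ⟨z, hz, hdist⟩ := mem_thickening_iff.1 (hf₀ x₀)
  refine ⟨z, hz, ?_⟩
  filter_upwards [(f₀.continuous.tendsto x₀).eventually (ball_mem_nhds _ hδ)] with x hx
  calc dist z (f₀ x) ≤ dist z (f₀ x₀) + dist (f₀ x₀) (f₀ x) := dist_triangle _ _ _
    _ < ε + δ := add_lt_add (by rwa [dist_comm]) (by rwa [dist_comm])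

end LowerSemicontinuous

/-- Michael selection theorem: a lower semicontinuous multifunction from a
paracompact Hausdorff space into a Banach space with nonempty closed convex
values has a continuous selection. -/
theorem michael_selection
    {X : Type*} [TopologicalSpace X] [ParacompactSpace X] [T2Space X]
    {Y : Type*} [NormedAddCommGroup Y] [NormedSpace ℝ Y] [CompleteSpace Y]
    (T : X → Set Y)
    (hlsc : ∀ V : Set Y, IsOpen V → IsOpen {x : X | (T x ∩ V).Nonempty})
    (hne : ∀ x, (T x).Nonempty)
    (hclosed : ∀ x, IsClosed (T x))
    (hconv : ∀ x, Convex ℝ (T x)) :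
    ∃ g : X → Y, Continuous g ∧ ∀ x, g x ∈ T x := by
  obtain ⟨F, hFT, hFF⟩ := exists_seq_of_forall_exists_succ
    (fun n (f : C(X, Y)) => ∀ x, f x ∈ thickening ((1 / 2 : ℝ) ^ n) (T x))
    (fun n f f' => ∀ x, dist (f x) (f' x) ≤ 2 * (1 / 2 : ℝ) ^ n)
    (by simpa using exists_continuous_forall_mem_thickening hlsc hne hconv one_pos)
    fun n f hf => by
      obtain ⟨f', hf'⟩ := exists_continuous_forall_mem_thickening_of_near hlsc hconv
        (by positivity : (0 : ℝ) < (1 / 2) ^ (n + 1)) hf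
      refine ⟨f', fun x => (hf' x).1, fun x => ?_⟩
      rw [dist_comm]
      linarith [(hf' x).2, pow_succ (1 / 2 : ℝ) n, pow_pos (by norm_num : (0 : ℝ) < 1 / 2) n]
  obtain ⟨g, hg⟩ := exists_tendstoUniformly_of_dist_le_geometric (by norm_num) (by norm_num) hFF
  refine ⟨g, hg.continuous (Eventually.of_forall fun n => (F n).continuous).frequently,
    fun x => (hclosed x).closure_subset ?_⟩
  exact mem_closure_of_tendsto_of_mem_thickening (hg.tendsto_at x)
    (tendsto_pow_atTop_nhds_zero_of_lt_one (by norm_num) (by norm_num)) (hFT · x)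
end

section
/- Let Y be a convex subset of a locally convex topological vector space over ℝ. For every convex neighborhood U of 0 there exists a neighborhood W of 0 such that for every subset A ⊆ Y, every n, every t ∈ Δₙ, and all tuples (x₀,…,xₙ) with xᵢ ∈ A + W ∩ Y, the convex combination Σ tᵢ xᵢ lies in (convexHull A) + U. -/
open Pointwise

theorem Convex.sum_smul_mem_convexHull_add {𝕜 E ι : Type*} [Field 𝕜] [LinearOrder 𝕜]
    [IsStrictOrderedRing 𝕜] [AddCommGroup E] [Module 𝕜 E] {A U : Set E} (hU : Convex 𝕜 U)
    {s : Finset ι} {t : ι → 𝕜} (h₀ : ∀ i ∈ s, 0 ≤ t i) (h₁ : ∑ i ∈ s, t i = 1) {x : ι → E}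
    (hx : ∀ i ∈ s, x i ∈ A + U) : ∑ i ∈ s, t i • x i ∈ convexHull 𝕜 A + U := by
  rw [← hU.convexHull_eq, ← convexHull_add]
  exact (convex_convexHull 𝕜 _).sum_mem h₀ h₁ fun i hi => subset_convexHull 𝕜 _ (hx i hi)

theorem convex_combination_uniformly_continuous_general
    {E : Type*} [AddCommGroup E] [Module ℝ E] [TopologicalSpace E]
    (Y : Set E)
    (U : Set E) (hU : U ∈ nhds (0 : E)) (hUconv : Convex ℝ U) :
    ∃ W ∈ nhds (0 : E), ∀ (A : Set E), A ⊆ Y →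
      ∀ (n : ℕ) (t : Fin (n + 1) → ℝ), t ∈ stdSimplex ℝ (Fin (n + 1)) →
      ∀ x : Fin (n + 1) → E, (∀ i, x i ∈ (A + W) ∩ Y) →
      (∑ i, t i • x i) ∈ (convexHull ℝ A) + U :=
  ⟨U, hU, fun _ _ _ _ ht _ hx =>
    hUconv.sum_smul_mem_convexHull_add (fun i _ => ht.1 i) ht.2 fun i _ => (hx i).1⟩

/-- Condition (E) for locally convex spaces: the convex combination operation
is uniformly continuous with respect to the points. -/
theorem convex_combination_uniformly_continuous
    {E : Type*} [AddCommGroup E] [Module ℝ E] [TopologicalSpace E]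
    [IsTopologicalAddGroup E] [ContinuousSMul ℝ E] [LocallyConvexSpace ℝ E]
    (Y : Set E) (hY : Convex ℝ Y)
    (U : Set E) (hU : U ∈ nhds (0 : E)) (hUconv : Convex ℝ U) :
    ∃ W ∈ nhds (0 : E), ∀ (A : Set E), A ⊆ Y →
      ∀ (n : ℕ) (t : Fin (n + 1) → ℝ), t ∈ stdSimplex ℝ (Fin (n + 1)) →
      ∀ x : Fin (n + 1) → E, (∀ i, x i ∈ (A + W) ∩ Y) →
      (∑ i, t i • x i) ∈ (convexHull ℝ A) + U :=
  convex_combination_uniformly_continuous_general Y U hU hUconv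
end

section
/- Let X be a compact Hausdorff space, Y a locally convex Hausdorff topological vector space, f : X → Y a continuous map, and R : Y → Set X an upper semicontinuous multifunction with nonempty compact values such that for every finite set a₀,…,aₙ ∈ Y and every continuous g : X → Δₙ, the composite t ↦ g(R(Σᵢ tᵢ aᵢ)) : Δₙ → Set Δₙ has a fixed point. Suppose moreover f(X) is totally bounded. Then the closure of the composite multifunction y ↦ closure(f(R(y))) has a fixed point: there exists y ∈ Y with y ∈ closure{f(x) : x ∈ R(y)}. -/
/-!
Cover the compact set `f(X)` by finitely many translates `aᵢ + W` of a convex neighbourhood `W`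
of `0` and let `g : X → Δₙ` be a subordinate partition of unity. A fixed point `t = g x` with
`x ∈ R (∑ tᵢ • aᵢ)` gives `y = ∑ tᵢ • aᵢ` with `f x - y = ∑ tᵢ • (f x - aᵢ) ∈ W` by convexity.
So `0` is in the closure of the set of `w` such that `x ∈ R (f x - w)` for some `x`. That set is
the projection along the compact factor `X` of a preimage of the graph of `R`, which is closed by
upper semicontinuity; hence `x ∈ R (f x)` for some `x`, and `f x` is a fixed point.
-/

open Set Topology Pointwise

theorem IsCompact.exists_fin_succ_cover_by_translates {G : Type*} [AddCommGroup G]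
    [TopologicalSpace G] [IsTopologicalAddGroup G] {K V : Set G} (hK : IsCompact K)
    (hV : (interior V).Nonempty) :
    ∃ (n : ℕ) (a : Fin (n + 1) → G), K ⊆ ⋃ i, (· - a i) ⁻¹' V := by
  obtain ⟨t, ht⟩ := compact_covered_by_add_left_translates hK hV
  refine ⟨t.card, Fin.cons 0 fun j => -(t.equivFin.symm j : G), fun k hk => ?_⟩
  obtain ⟨g, hg, hgk⟩ := mem_iUnion₂.1 (ht hk)
  exact mem_iUnion.2 ⟨(t.equivFin ⟨g, hg⟩).succ, by simpa [add_comm] using hgk⟩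

theorem exists_continuous_stdSimplex_subordinate {X ι : Type*} [TopologicalSpace X]
    [NormalSpace X] [ParacompactSpace X] [Fintype ι] {U : ι → Set X} (hU : ∀ i, IsOpen (U i))
    (hcov : univ ⊆ ⋃ i, U i) :
    ∃ g : X → stdSimplex ℝ ι, Continuous g ∧ ∀ x i, (g x : ι → ℝ) i ≠ 0 → x ∈ U i := by
  obtain ⟨ρ, hρ⟩ := PartitionOfUnity.exists_isSubordinate isClosed_univ U hU hcov
  have hsum (x : X) : ∑ i, ρ i x = 1 := by
    rw [← finsum_eq_sum_of_fintype]
    exact ρ.sum_eq_one (mem_univ x)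
  exact ⟨fun x => ⟨fun i => ρ i x, fun i => ρ.nonneg i x, hsum x⟩,
    (continuous_pi fun i => (ρ i).continuous).subtype_mk _,
    fun x i hi => hρ i (subset_closure hi)⟩

theorem exists_approx_fixedPoint {X : Type*} [TopologicalSpace X] [CompactSpace X] [T2Space X]
    {Y : Type*} [AddCommGroup Y] [Module ℝ Y] [TopologicalSpace Y] [IsTopologicalAddGroup Y]
    {f : X → Y} (hf : Continuous f) {R : Y → Set X}
    (hfix : ∀ (n : ℕ) (a : Fin (n + 1) → Y) (g : X → stdSimplex ℝ (Fin (n + 1))),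
      Continuous g →
      ∃ t : stdSimplex ℝ (Fin (n + 1)),
        t ∈ g '' R (∑ i, (t : Fin (n + 1) → ℝ) i • a i))
    {W : Set Y} (hW : W ∈ 𝓝 0) (hWc : Convex ℝ W) :
    ∃ y, ∃ x ∈ R y, f x - y ∈ W := by
  obtain ⟨n, a, hcov⟩ := (isCompact_range hf).exists_fin_succ_cover_by_translates
    (V := interior W) (by rw [interior_interior]; exact ⟨0, mem_interior_iff_mem_nhds.2 hW⟩)
  obtain ⟨g, hg, hgU⟩ := exists_continuous_stdSimplex_subordinate
    (U := fun i => f ⁻¹' ((· - a i) ⁻¹' interior W))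
    (fun i => (isOpen_interior.preimage (continuous_sub_right _)).preimage hf)
    (by rw [← preimage_iUnion, ← image_subset_iff, image_univ]; exact hcov)
  obtain ⟨t, x, hx, rfl⟩ := hfix n a g hg
  refine ⟨_, x, hx, ?_⟩
  have hsum : f x - ∑ i, (g x : Fin (n + 1) → ℝ) i • a i
      = ∑ᶠ i, (g x : Fin (n + 1) → ℝ) i • (f x - a i) := by
    simp only [finsum_eq_sum_of_fintype, smul_sub, Finset.sum_sub_distrib, ← Finset.sum_smul]
    rw [stdSimplex.sum_eq_one, one_smul]
  rw [hsum]
  exact hWc.finsum_mem (stdSimplex.zero_le (g x))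
    (by rw [finsum_eq_sum_of_fintype, stdSimplex.sum_eq_one])
    fun i hi => interior_subset (hgU x i hi)

theorem isClosed_graph_of_upperSemicontinuous {X Y : Type*} [TopologicalSpace X]
    [TopologicalSpace Y] [RegularSpace X] {R : Y → Set X}
    (husc : ∀ V : Set X, IsOpen V → IsOpen {y : Y | R y ⊆ V}) (hR : ∀ y, IsClosed (R y)) :
    IsClosed {p : Y × X | p.2 ∈ R p.1} := by
  refine isOpen_compl_iff.1 (isOpen_iff_mem_nhds.2 fun ⟨y, x⟩ hx => ?_)
  have hsep : Disjoint (𝓝ˢ (R y)) (𝓝 x) := disjoint_nhdsSet_nhds.2 (by rwa [(hR y).closure_eq])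
  obtain ⟨s, hs, u, hu, hsu⟩ := Filter.disjoint_iff.1 hsep
  obtain ⟨V, hVo, hRV, hVs⟩ := mem_nhdsSet_iff_exists.1 hs
  filter_upwards [prod_mem_nhds ((husc V hVo).mem_nhds hRV) hu] with ⟨y', x'⟩ ⟨hy', hx'⟩ hmem
  exact hsu.ne_of_mem (hVs (hy' hmem)) hx' rfl

theorem kakutani_type_fixed_point_general
    {X : Type*} [TopologicalSpace X] [CompactSpace X] [T2Space X]
    {Y : Type*} [AddCommGroup Y] [Module ℝ Y] [TopologicalSpace Y]
    [IsTopologicalAddGroup Y] [LocallyConvexSpace ℝ Y]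
    (f : X → Y) (hf : Continuous f)
    (R : Y → Set X)
    (husc : ∀ V : Set X, IsOpen V → IsOpen {y : Y | R y ⊆ V})
    (hcomp : ∀ y, IsCompact (R y))
    (hfix : ∀ (n : ℕ) (a : Fin (n + 1) → Y) (g : X → stdSimplex ℝ (Fin (n + 1))),
      Continuous g →
      ∃ t : stdSimplex ℝ (Fin (n + 1)),
        t ∈ g '' R (∑ i, (t : Fin (n + 1) → ℝ) i • a i)) :
    ∃ y : Y, y ∈ closure (f '' R y) := by
  set S := {p : Y × X | p.2 ∈ R (f p.2 - p.1)}
  have hS : IsClosed S :=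
    (isClosed_graph_of_upperSemicontinuous husc fun y => (hcomp y).isClosed).preimage
      (by fun_prop : Continuous fun p : Y × X => (f p.2 - p.1, p.2))
  have h0 : (0 : Y) ∈ closure (Prod.fst '' S) := by
    refine (mem_closure_iff_nhds_basis (LocallyConvexSpace.convex_basis_zero ℝ Y)).2
      fun W ⟨hW, hWc⟩ => ?_
    obtain ⟨y, x, hx, hxy⟩ := exists_approx_fixedPoint hf hfix hW hWc
    exact ⟨f x - y, ⟨(f x - y, x), by simpa [S] using hx, rfl⟩, hxy⟩
  obtain ⟨⟨_, x⟩, hx, rfl⟩ := (isClosedMap_fst_of_compactSpace _ hS).closure_subset h0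
  exact ⟨f x, subset_closure ⟨x, by simpa [S] using hx, rfl⟩⟩

/-- Kakutani-type fixed point theorem specialized to locally convex spaces. -/
theorem kakutani_type_fixed_point
    {X : Type*} [TopologicalSpace X] [CompactSpace X] [T2Space X]
    {Y : Type*} [AddCommGroup Y] [Module ℝ Y] [TopologicalSpace Y]
    [IsTopologicalAddGroup Y] [ContinuousSMul ℝ Y] [LocallyConvexSpace ℝ Y]
    [T2Space Y]
    (f : X → Y) (hf : Continuous f)
    (R : Y → Set X)
    (husc : ∀ V : Set X, IsOpen V → IsOpen {y : Y | R y ⊆ V})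
    (hne : ∀ y, (R y).Nonempty)
    (hcomp : ∀ y, IsCompact (R y))
    (hfix : ∀ (n : ℕ) (a : Fin (n + 1) → Y) (g : X → stdSimplex ℝ (Fin (n + 1))),
      Continuous g →
      ∃ t : stdSimplex ℝ (Fin (n + 1)),
        t ∈ g '' R (∑ i, (t : Fin (n + 1) → ℝ) i • a i))
    (htb : ∀ W ∈ nhds (0 : Y), ∃ s : Set Y, s.Finite ∧
      f '' Set.univ ⊆ ⋃ a ∈ s, {a} + W) :
    ∃ y : Y, y ∈ closure (f '' R y) :=
  kakutani_type_fixed_point_general f hf R husc hcomp hfix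
end

section
/- Let Y be a compact Hausdorff uniform space and let S : Y → Set Y be an upper semicontinuous multifunction with closed values. Suppose that for every entourage U of Y there exists y_U ∈ Y with y_U ∈ B(S(y_U), U) (a U-almost fixed point, i.e., (y_U, s) ∈ U for some s ∈ S(y_U)). Then S has a fixed point: there exists y* ∈ Y with y* ∈ S(y*). -/
/-- From almost fixed points to fixed points: an upper semicontinuous
closed-valued multifunction on a compact Hausdorff uniform space having a
`U`-almost fixed point for every entourage `U` has a fixed point. -/
theorem fixed_point_of_almost_fixed_points
    {Y : Type*} [UniformSpace Y] [CompactSpace Y] [T2Space Y]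
    (S : Y → Set Y)
    (husc : ∀ V : Set Y, IsOpen V → IsOpen {y : Y | S y ⊆ V})
    (hclosed : ∀ y, IsClosed (S y))
    (halmost : ∀ U ∈ uniformity Y, ∃ y : Y, ∃ s ∈ S y, (s, y) ∈ U) :
    ∃ y : Y, y ∈ S y := by
  by_contra h
  push_neg at h
  -- The complement of the (swapped) graph is open.
  have hopen : IsOpen {p : Y × Y | p.1 ∉ S p.2} := by
    rw [isOpen_iff_mem_nhds]
    rintro ⟨a, b⟩ (hab : a ∉ S b)
    obtain ⟨W, V, hWo, hVo, haW, hSV, hdisj⟩ :=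
      SeparatedNhds.of_isCompact_isCompact isCompact_singleton
        ((hclosed b).isCompact) (by simpa using hab)
    have hmem : W ×ˢ {y : Y | S y ⊆ V} ∈ nhds (a, b) := by
      refine (hWo.prod (husc V hVo)).mem_nhds ?_
      exact ⟨haW rfl, hSV⟩
    refine Filter.mem_of_superset hmem ?_
    rintro ⟨x, y⟩ ⟨hx, hy⟩ hxS
    exact hdisj.ne_of_mem hx (hy hxS) rfl
  -- It contains the diagonal (no fixed points), hence is an entourage.
  have hU : {p : Y × Y | p.1 ∉ S p.2} ∈ uniformity Y := by
    rw [← nhdsSet_diagonal_eq_uniformity]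
    exact hopen.mem_nhdsSet.2 (by rintro ⟨x, y⟩ (rfl : x = y); exact h x)
  obtain ⟨y, s, hs, hsy⟩ := halmost _ hU
  exact hsy hs
end

section
/- Let X be a paracompact Hausdorff space, Y a Banach space, T : X → Set Y lower semicontinuous with nonempty convex values, and g : X → Y a continuous map such that g(x) ∈ B(T(x), ε) for all x (i.e., dist(g(x), T(x)) < ε). Then the multifunction G(x) = B(g(x), ε) ∩ T(x) (open ball of radius ε around g(x) intersected with T(x)) is lower semicontinuous with nonempty convex values. -/
/-- The inductive step in Michael's selection theorem: intersecting a lower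
semicontinuous convex-valued map with open balls around a continuous almost
selection preserves lower semicontinuity, nonemptiness and convexity. -/
theorem michael_inductive_step
    {X : Type*} [TopologicalSpace X] [ParacompactSpace X] [T2Space X]
    {Y : Type*} [NormedAddCommGroup Y] [NormedSpace ℝ Y] [CompleteSpace Y]
    (T : X → Set Y)
    (hlsc : ∀ V : Set Y, IsOpen V → IsOpen {x : X | (T x ∩ V).Nonempty})
    (hne : ∀ x, (T x).Nonempty)
    (hconv : ∀ x, Convex ℝ (T x))
    (ε : ℝ) (hε : 0 < ε)
    (g : X → Y) (hg : Continuous g)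
    (hgnear : ∀ x, ∃ y ∈ T x, dist (g x) y < ε) :
    (∀ V : Set Y, IsOpen V →
        IsOpen {x : X | ((Metric.ball (g x) ε ∩ T x) ∩ V).Nonempty}) ∧
      (∀ x, (Metric.ball (g x) ε ∩ T x).Nonempty) ∧
      (∀ x, Convex ℝ (Metric.ball (g x) ε ∩ T x)) := by
  refine ⟨?_, ?_, ?_⟩
  · intro V hV
    rw [isOpen_iff_mem_nhds]
    rintro x₀ ⟨y₀, ⟨hy₀b, hy₀T⟩, hy₀V⟩
    obtain ⟨δ₁, hδ₁, hballV⟩ := Metric.isOpen_iff.1 hV y₀ hy₀V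
    have hd : dist (g x₀) y₀ < ε := by
      simpa [dist_comm] using Metric.mem_ball.1 hy₀b
    set δ := min (δ₁ / 2) ((ε - dist (g x₀) y₀) / 2) with hδdef
    have hδpos : 0 < δ := lt_min (by linarith) (by linarith)
    have hδ1 : δ ≤ δ₁ / 2 := min_le_left _ _
    have hδ2 : δ ≤ (ε - dist (g x₀) y₀) / 2 := min_le_right _ _
    have h1 : IsOpen {x | (T x ∩ Metric.ball y₀ δ).Nonempty} :=
      hlsc _ Metric.isOpen_ball
    have h2 : IsOpen {x | dist (g x) (g x₀) < δ} := by
      have : IsOpen (g ⁻¹' Metric.ball (g x₀) δ) :=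
        Metric.isOpen_ball.preimage hg
      simpa [Metric.ball, Set.preimage] using this
    have hx₀1 : x₀ ∈ {x | (T x ∩ Metric.ball y₀ δ).Nonempty} :=
      ⟨y₀, hy₀T, Metric.mem_ball_self hδpos⟩
    have hx₀2 : x₀ ∈ {x | dist (g x) (g x₀) < δ} := by
      simp [hδpos]
    filter_upwards [h1.mem_nhds hx₀1, h2.mem_nhds hx₀2] with x hx1 hx2
    obtain ⟨y, hyT, hyb⟩ := hx1
    have hy : dist y y₀ < δ := Metric.mem_ball.1 hyb
    refine ⟨y, ⟨?_, hyT⟩, hballV ?_⟩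
    · rw [Metric.mem_ball]
      calc dist y (g x) ≤ dist y y₀ + dist y₀ (g x₀) + dist (g x₀) (g x) :=
            dist_triangle4 _ _ _ _
        _ < δ + dist y₀ (g x₀) + δ := by
            have h3 : dist (g x₀) (g x) < δ := by rwa [dist_comm]
            linarith
        _ ≤ ε := by rw [dist_comm y₀]; linarith
    · exact Metric.mem_ball.2 (lt_of_lt_of_le hy (by linarith))
  · intro x
    obtain ⟨y, hyT, hyd⟩ := hgnear x
    exact ⟨y, Metric.mem_ball.2 (by rwa [dist_comm]), hyT⟩
  · intro x
    exact (convex_ball _ _).inter (hconv x)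
end

section
/- Let Y be a Hausdorff compact space regarded as the subset of the quotient Δ'(Y) of Δ(Y) = Δ_ω × Y^ω by the relation (d,a) ~ (d',a') iff for all y ∈ Y, Σ_{aᵢ=y} dᵢ = Σ_{a'ᵢ=y} d'ᵢ, via the embedding sending y to the class of any (d, a) with aᵢ = y whenever dᵢ ≠ 0. Then this embedding is well-defined and injective, and its image p(Q) equals a homeomorphic copy of Y inside the Hausdorff space Δ'(Y). -/
/-- The infinite-dimensional simplex of finitely supported probability
vectors indexed by `I`. -/
def DeltaOmega (I : Type*) : Type _ :=
  {d : I → ℝ // (∀ i, 0 ≤ d i) ∧ (Function.support d).Finite ∧ ∑' i, d i = 1}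

instance (I : Type*) : TopologicalSpace (DeltaOmega I) :=
  inferInstanceAs (TopologicalSpace
    {d : I → ℝ // (∀ i, 0 ≤ d i) ∧ (Function.support d).Finite ∧ ∑' i, d i = 1})

/-- The total mass assigned to the point `y` by the formal convex combination
`(d, a)`. -/
noncomputable def massAt {I Y : Type*} (p : DeltaOmega I × (I → Y)) (y : Y) : ℝ :=
  ∑' i, Set.indicator {i | p.2 i = y} p.1.1 i

/-- The equivalence relation identifying formal convex combinations with the
same mass at every point. -/
def deltaSetoid (I Y : Type*) : Setoid (DeltaOmega I × (I → Y)) :=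
  ⟨fun p q => massAt p = massAt q,
    ⟨fun _ => rfl, Eq.symm, Eq.trans⟩⟩

/-! The pairing `f ↦ ∑ dᵢ f(aᵢ)` of a formal combination `(d, a)` with bounded continuous
functions on `Y` is constant on classes, continuous, and separates classes, so it maps `Δ'(Y)`
continuously and injectively into a Hausdorff space; hence `Δ'(Y)` is Hausdorff. The map
`y ↦ [(d₀, const y)]` is then a continuous injection of a compact space into a Hausdorff one,
i.e. an embedding. -/

open Set Function Filter Topology
open scoped BoundedContinuousFunction

namespace DeltaOmega

variable {I : Type*}

noncomputable def supportFinset (d : DeltaOmega I) : Finset I := d.2.2.1.toFinset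

lemma mem_supportFinset {d : DeltaOmega I} {i : I} : i ∈ d.supportFinset ↔ d.1 i ≠ 0 := by
  simp [supportFinset]

lemma tsum_eq_sum_of_supportFinset_subset {d : DeltaOmega I} {s : Finset I}
    (hs : d.supportFinset ⊆ s) {g : I → ℝ} (hg : ∀ i, d.1 i = 0 → g i = 0) :
    ∑' i, g i = ∑ i ∈ s, g i :=
  tsum_eq_sum fun i hi => hg i (not_not.mp fun h => hi (hs (mem_supportFinset.mpr h)))

lemma sum_eq_one_of_supportFinset_subset {d : DeltaOmega I} {s : Finset I}
    (hs : d.supportFinset ⊆ s) : ∑ i ∈ s, d.1 i = 1 := by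
  rw [← tsum_eq_sum_of_supportFinset_subset hs fun _ h => h, d.2.2.2]

end DeltaOmega

open DeltaOmega

section

variable {I Y : Type*}

lemma massAt_eq_sum (p : DeltaOmega I × (I → Y)) {s : Finset I}
    (hs : p.1.supportFinset ⊆ s) (y : Y) :
    massAt p y = ∑ i ∈ s, {i | p.2 i = y}.indicator p.1.1 i :=
  tsum_eq_sum_of_supportFinset_subset hs fun i h => by simp [h]

lemma massAt_eq_indicator_of_forall_eq (y : Y) (d : DeltaOmega I) (a : I → Y)
    (h : ∀ i, d.1 i ≠ 0 → a i = y) :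
    massAt (d, a) = ({y} : Set Y).indicator 1 := by
  funext y'
  by_cases hy : y' = y
  · subst hy
    rw [indicator_of_mem (mem_singleton y'), Pi.one_apply, ← d.2.2.2]
    refine tsum_congr fun i => ?_
    by_cases hd : d.1 i = 0
    · simp [hd]
    · exact indicator_of_mem (s := {i | a i = y'}) (h i hd) _
  · rw [indicator_of_notMem (mem_singleton_iff.not.mpr hy) (1 : Y → ℝ)]
    refine (tsum_congr fun i => ?_).trans tsum_zero
    by_cases hd : d.1 i = 0
    · simp [hd]
    · exact indicator_of_notMem (s := {i | a i = y'}) (fun hi => hy (hi.symm.trans (h i hd))) _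

variable [TopologicalSpace Y]

/-- Integration against the finitely supported measure `∑ dᵢ δ_{aᵢ}`. -/
noncomputable def pairing (p : DeltaOmega I × (I → Y)) (f : Y →ᵇ ℝ) : ℝ :=
  ∑' i, p.1.1 i * f (p.2 i)

lemma pairing_eq_sum (p : DeltaOmega I × (I → Y)) (f : Y →ᵇ ℝ) {s : Finset I}
    (hs : p.1.supportFinset ⊆ s) : pairing p f = ∑ i ∈ s, p.1.1 i * f (p.2 i) :=
  tsum_eq_sum_of_supportFinset_subset hs fun i h => by simp [h]

lemma pairing_eq_sum_massAt [DecidableEq Y] (p : DeltaOmega I × (I → Y)) (f : Y →ᵇ ℝ)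
    {T : Finset Y} (hT : ∀ i ∈ p.1.supportFinset, p.2 i ∈ T) :
    pairing p f = ∑ y ∈ T, massAt p y * f y := by
  rw [pairing_eq_sum p f subset_rfl, ← Finset.sum_fiberwise_of_maps_to hT]
  refine Finset.sum_congr rfl fun y _ => ?_
  rw [massAt_eq_sum p subset_rfl, Finset.sum_mul, Finset.sum_filter]
  refine Finset.sum_congr rfl fun i _ => ?_
  by_cases hi : p.2 i = y <;> simp [hi]

lemma pairing_eq_of_massAt_eq {p q : DeltaOmega I × (I → Y)} (h : massAt p = massAt q) :
    pairing p = pairing q := by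
  classical
  funext f
  let T := p.1.supportFinset.image p.2 ∪ q.1.supportFinset.image q.2
  rw [pairing_eq_sum_massAt p f (T := T) fun i hi => by simp [T, Finset.mem_image_of_mem _ hi],
    pairing_eq_sum_massAt q f (T := T) fun i hi => by simp [T, Finset.mem_image_of_mem _ hi], h]

/-- Urysohn's lemma yields a bounded continuous function equal to `1` at `y` and to `0` at
the finitely many other points charged by `p` or `q`; pairing with it reads off the mass at `y`. -/
lemma massAt_eq_of_pairing_eq [T1Space Y] [NormalSpace Y] {p q : DeltaOmega I × (I → Y)}
    (h : pairing p = pairing q) : massAt p = massAt q := by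
  classical
  funext y
  let T := insert y (p.1.supportFinset.image p.2 ∪ q.1.supportFinset.image q.2)
  obtain ⟨f, hf0, hf1, -⟩ := exists_bounded_zero_one_of_closed (T.erase y).finite_toSet.isClosed
    isClosed_singleton (disjoint_singleton_right.mpr (Finset.notMem_erase y T))
  have pairing_eq_massAt : ∀ r : DeltaOmega I × (I → Y), (∀ i ∈ r.1.supportFinset, r.2 i ∈ T) →
      pairing r f = massAt r y := by
    intro r hr
    rw [pairing_eq_sum_massAt r f hr, Finset.sum_eq_single_of_mem y (Finset.mem_insert_self y _)]
    · simp [hf1 (mem_singleton y)]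
    · intro z hz hne
      simp [hf0 (Finset.mem_coe.mpr (Finset.mem_erase.mpr ⟨hne, hz⟩))]
  rw [← pairing_eq_massAt p fun i hi => by simp [T, Finset.mem_image_of_mem _ hi],
    ← pairing_eq_massAt q fun i hi => by simp [T, Finset.mem_image_of_mem _ hi], h]

lemma abs_pairing_sub_sum_le (p : DeltaOmega I × (I → Y)) (f : Y →ᵇ ℝ) (S : Finset I) :
    |pairing p f - ∑ i ∈ S, p.1.1 i * f (p.2 i)| ≤ ‖f‖ * (1 - ∑ i ∈ S, p.1.1 i) := by
  classical
  let U := S ∪ p.1.supportFinset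
  have hSU : S ⊆ U := Finset.subset_union_left
  have hrest : pairing p f - ∑ i ∈ S, p.1.1 i * f (p.2 i) = ∑ i ∈ U \ S, p.1.1 i * f (p.2 i) := by
    rw [pairing_eq_sum p f Finset.subset_union_right, ← Finset.sum_sdiff hSU]
    ring
  have hmass : 1 - ∑ i ∈ S, p.1.1 i = ∑ i ∈ U \ S, p.1.1 i := by
    have hU := sum_eq_one_of_supportFinset_subset (Finset.subset_union_right : _ ⊆ U)
    rw [← Finset.sum_sdiff hSU] at hU
    linarith
  rw [hrest, hmass, Finset.mul_sum]
  refine (Finset.abs_sum_le_sum_abs _ _).trans (Finset.sum_le_sum fun i _ => ?_)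
  rw [abs_mul, abs_of_nonneg (p.1.2.1 i), mul_comm ‖f‖]
  exact mul_le_mul_of_nonneg_left ((Real.norm_eq_abs _).symm ▸ f.norm_coe_le_norm _) (p.1.2.1 i)

/-- Near `p₀` the pairing is a finite sum over the support of `p₀`, up to an error controlled by
the mass that escapes that support, which tends to `0`. -/
lemma continuous_pairing : Continuous (pairing : DeltaOmega I × (I → Y) → (Y →ᵇ ℝ) → ℝ) := by
  refine continuous_pi fun f => continuous_iff_continuousAt.mpr fun p₀ => ?_
  let S := p₀.1.supportFinset
  have hweight : ∀ i, Continuous fun p : DeltaOmega I × (I → Y) => p.1.1 i :=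
    fun i => (continuous_apply i).comp (continuous_subtype_val.comp continuous_fst)
  have hsum : Continuous fun p : DeltaOmega I × (I → Y) => ∑ i ∈ S, p.1.1 i * f (p.2 i) :=
    continuous_finsetSum _ fun i _ =>
      (hweight i).mul (f.continuous.comp ((continuous_apply i).comp continuous_snd))
  have herror : Tendsto (fun p : DeltaOmega I × (I → Y) => ‖f‖ * (1 - ∑ i ∈ S, p.1.1 i))
      (𝓝 p₀) (𝓝 0) := by
    have := ((continuous_finsetSum S fun i _ => hweight i).tendsto p₀).const_sub 1 |>.const_mul ‖f‖
    rwa [sum_eq_one_of_supportFinset_subset subset_rfl, sub_self, mul_zero] at this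
  have hdiff := squeeze_zero_norm
    (fun p => (Real.norm_eq_abs _).trans_le (abs_pairing_sub_sum_le p f S)) herror
  have := (hdiff.add (hsum.tendsto p₀)).congr fun p => sub_add_cancel (pairing p f) _
  rwa [zero_add, ← pairing_eq_sum p₀ f subset_rfl] at this

instance [T1Space Y] [NormalSpace Y] : T2Space (Quotient (deltaSetoid I Y)) :=
  T2Space.of_injective_continuous
    (f := Quotient.lift pairing fun _ _ => pairing_eq_of_massAt_eq)
    (fun a b => Quotient.inductionOn₂ a b fun _ _ h => Quotient.sound (massAt_eq_of_pairing_eq h))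
    (continuous_pairing.quotient_lift _)

end

theorem compact_embeds_in_delta_quotient_general
    {I : Type*} {Y : Type*} [TopologicalSpace Y]
    [CompactSpace Y] [T2Space Y]
    (d₀ : DeltaOmega I) :
    (∀ (y : Y) (d : DeltaOmega I) (a : I → Y), (∀ i, d.1 i ≠ 0 → a i = y) →
      Quotient.mk (deltaSetoid I Y) (d, a) =
        Quotient.mk (deltaSetoid I Y) (d₀, fun _ => y)) ∧
    Function.Injective
      (fun y : Y => Quotient.mk (deltaSetoid I Y) (d₀, fun _ => y)) ∧
    Topology.IsEmbedding
      (fun y : Y => Quotient.mk (deltaSetoid I Y) (d₀, fun _ => y)) ∧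
    T2Space (Quotient (deltaSetoid I Y)) := by
  have hconst (y : Y) := massAt_eq_indicator_of_forall_eq y d₀ (fun _ => y) fun _ _ => rfl
  have well_defined (y : Y) (d : DeltaOmega I) (a : I → Y) (h : ∀ i, d.1 i ≠ 0 → a i = y) :
      Quotient.mk (deltaSetoid I Y) (d, a) = Quotient.mk _ (d₀, fun _ => y) :=
    Quotient.sound ((massAt_eq_indicator_of_forall_eq y d a h).trans (hconst y).symm)
  have injective : Injective fun y : Y => Quotient.mk (deltaSetoid I Y) (d₀, fun _ => y) :=
    fun y₁ y₂ h => singleton_injective <| indicator_one_inj ℝ <|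
      (hconst y₁).symm.trans ((Quotient.exact h).trans (hconst y₂))
  have continuous : Continuous fun y : Y => Quotient.mk (deltaSetoid I Y) (d₀, fun _ => y) :=
    continuous_quotient_mk'.comp (continuous_const.prodMk (continuous_pi fun _ => continuous_id))
  exact ⟨well_defined, injective, (continuous.isClosedEmbedding injective).isEmbedding,
    inferInstance⟩

/-- Lemma 7.1: for a compact Hausdorff space `Y`, the map sending `y` to the
class of any formal convex combination concentrated at `y` is well defined,
injective, and a topological embedding of `Y` into the quotient `Δ'(Y)`,
which is Hausdorff. -/
theorem compact_embeds_in_delta_quotient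
    {I : Type*} [Infinite I] {Y : Type*} [TopologicalSpace Y]
    [CompactSpace Y] [T2Space Y]
    (d₀ : DeltaOmega I) :
    (∀ (y : Y) (d : DeltaOmega I) (a : I → Y), (∀ i, d.1 i ≠ 0 → a i = y) →
      Quotient.mk (deltaSetoid I Y) (d, a) =
        Quotient.mk (deltaSetoid I Y) (d₀, fun _ => y)) ∧
    Function.Injective
      (fun y : Y => Quotient.mk (deltaSetoid I Y) (d₀, fun _ => y)) ∧
    Topology.IsEmbedding
      (fun y : Y => Quotient.mk (deltaSetoid I Y) (d₀, fun _ => y)) ∧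
    T2Space (Quotient (deltaSetoid I Y)) :=
  compact_embeds_in_delta_quotient_general d₀
end
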